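/- arXiv:0911.2266 — 2 statements merged into one kernel-verified Lean document; each statement's English description precedes it below -/
import Mathlib

section
/- Fix an integer m ≥ 2 and δ > 0. There is a constant C > 0 depending only on m such that if v ≥ C · δ^{-(1 − 1/m)}, then for every ζ ∈ ℂ, |1/2 + δ + ζ|² + |ζ|^m v^m > 1/4. -/
/-!
Take `C = 1` and write `r = ‖ζ‖`. If `r < δ`, then `‖1/2 + δ + ζ‖ ≥ 1/2 + δ - r > 1/2`.
If `r ≥ δ`, the bound on `v` says `v ^ m * δ ^ (m - 1) ≥ 1`, so `r ^ m * v ^ m ≥ r`, and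
`(1/2 + δ - r) ^ 2 + r = 1/4 + δ + (r - δ) ^ 2 > 1/4`.
-/

lemma abs_sub_norm_le_norm_ofReal_add {x : ℝ} (hx : 0 ≤ x) (ζ : ℂ) :
    |x - ‖ζ‖| ≤ ‖(x : ℂ) + ζ‖ := by
  simpa [Complex.norm_real, abs_of_nonneg hx] using abs_norm_sub_norm_le (x : ℂ) (-ζ)

lemma rpow_neg_one_sub_inv_pow_mul_pow_pred {m : ℕ} (hm : 1 ≤ m) {δ : ℝ} (hδ : 0 < δ) :
    (δ ^ (-(1 - 1 / (m : ℝ)))) ^ m * δ ^ (m - 1) = 1 := by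
  have hm0 : (m : ℝ) ≠ 0 := by positivity
  have hexp : -(1 - 1 / (m : ℝ)) * m + ((m - 1 : ℕ) : ℝ) = 0 := by
    push_cast [Nat.cast_sub hm]
    field_simp
    ring
  rw [← Real.rpow_natCast, ← Real.rpow_mul hδ.le, ← Real.rpow_natCast δ (m - 1),
    ← Real.rpow_add hδ, hexp, Real.rpow_zero]

lemma one_le_pow_mul_pow_pred {m : ℕ} (hm : 1 ≤ m) {δ v : ℝ} (hδ : 0 < δ)
    (hv : δ ^ (-(1 - 1 / (m : ℝ))) ≤ v) : 1 ≤ v ^ m * δ ^ (m - 1) := by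
  rw [← rpow_neg_one_sub_inv_pow_mul_pow_pred hm hδ]
  gcongr

lemma le_pow_mul_pow {m : ℕ} (hm : 1 ≤ m) {δ r v : ℝ} (hδ : 0 < δ) (hr : δ ≤ r)
    (hv : 1 ≤ v ^ m * δ ^ (m - 1)) : r ≤ r ^ m * v ^ m := by
  have hr0 : 0 ≤ r := hδ.le.trans hr
  have hvm : 0 ≤ v ^ m := (pos_of_mul_pos_left (one_pos.trans_le hv) (by positivity)).le
  have hrm : r ^ m = r * r ^ (m - 1) := by rw [← pow_succ', Nat.sub_add_cancel hm]
  calc r ≤ r * (v ^ m * δ ^ (m - 1)) := le_mul_of_one_le_right hr0 hv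
    _ ≤ r * (v ^ m * r ^ (m - 1)) := by gcongr
    _ = r ^ m * v ^ m := by rw [hrm]; ring

lemma quarter_lt_sq_add {δ r A B : ℝ} (hδ : 0 < δ) (hA : |1 / 2 + δ - r| ≤ A) (hB : r ≤ B) :
    1 / 4 < A ^ 2 + B := by
  have hsq : (1 / 2 + δ - r) ^ 2 ≤ A ^ 2 := sq_le_sq' (abs_le.mp hA).1 (abs_le.mp hA).2
  nlinarith [sq_nonneg (r - δ)]

theorem line_avoids_inner_boundary (m : ℕ) (hm : 2 ≤ m) :
    ∃ C : ℝ, 0 < C ∧ ∀ δ : ℝ, 0 < δ → ∀ v : ℝ,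
      v ≥ C * δ ^ (-(1 - 1 / (m : ℝ))) →
      ∀ ζ : ℂ, ‖(1 / 2 + (δ : ℂ) + ζ)‖ ^ 2 + ‖ζ‖ ^ m * v ^ m > 1 / 4 := by
  refine ⟨1, one_pos, fun δ hδ v hv ζ => ?_⟩
  rw [one_mul] at hv
  have hnorm : |1 / 2 + δ - ‖ζ‖| ≤ ‖(1 / 2 + (δ : ℂ) + ζ)‖ := by
    simpa using abs_sub_norm_le_norm_ofReal_add (x := 1 / 2 + δ) (by positivity) ζ
  rcases lt_or_ge ‖ζ‖ δ with hsmall | hlarge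
  · have hhalf : 1 / 2 < ‖(1 / 2 + (δ : ℂ) + ζ)‖ :=
      (by linarith : 1 / 2 < 1 / 2 + δ - ‖ζ‖).trans_le ((le_abs_self _).trans hnorm)
    have hsq : (1 / 2 : ℝ) ^ 2 < ‖(1 / 2 + (δ : ℂ) + ζ)‖ ^ 2 := by gcongr
    have hv0 : 0 ≤ v := (Real.rpow_pos_of_pos hδ _).le.trans hv
    have hterm : 0 ≤ ‖ζ‖ ^ m * v ^ m := by positivity
    linarith
  · exact quarter_lt_sq_add hδ hnorm
      (le_pow_mul_pow (by omega) hδ hlarge (one_le_pow_mul_pow_pred (by omega) hδ hv))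
end

section
/- Fix an integer m ≥ 2, let c = 1/3, and let 0 < δ be sufficiently small. Define f(z) = δ^{2/m}|(z − 1/2 − δ)/(z − 1/2 + δ)|². Then for all z ∈ ℂ with 1/4 − c²δ < |z|² < 1 one has f(z) ≤ 5 δ^{2/m}. -/
/-!
Writing `w = z - 1/2`, the inequality `‖w - δ‖² ≤ 5 ‖w + δ‖²` is equivalent to
`0 ≤ ‖w‖² + 3δ Re w + δ²`. The lower bound on `‖z‖² = ‖w‖² + Re w + 1/4` gives
`Re w > -δ/9 - ‖w‖²`, so this quadratic exceeds `(1 - 3δ) ‖w‖² + 2δ²/3 ≥ 0` once `δ ≤ 1/3`.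
-/

namespace Complex

lemma sq_norm_add_ofReal (w : ℂ) (a : ℝ) : ‖w + a‖ ^ 2 = ‖w‖ ^ 2 + 2 * a * w.re + a ^ 2 := by
  simp only [Complex.sq_norm, normSq_apply, add_re, add_im, ofReal_re, ofReal_im]
  ring

lemma sq_norm_sub_ofReal (w : ℂ) (a : ℝ) : ‖w - a‖ ^ 2 = ‖w‖ ^ 2 - 2 * a * w.re + a ^ 2 := by
  simp only [Complex.sq_norm, normSq_apply, sub_re, sub_im, ofReal_re, ofReal_im]
  ring

lemma sq_norm_div_sub_add_ofReal_le_five {w : ℂ} {δ : ℝ}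
    (h : 0 ≤ ‖w‖ ^ 2 + 3 * δ * w.re + δ ^ 2) : ‖(w - δ) / (w + δ)‖ ^ 2 ≤ 5 := by
  rcases eq_or_ne (w + δ) 0 with hzero | hne
  · simp [hzero]
  rw [norm_div, div_pow, div_le_iff₀ (by positivity), sq_norm_sub_ofReal, sq_norm_add_ofReal]
  linarith

lemma quadratic_nonneg_of_lt_sq_norm {z : ℂ} {δ : ℝ} (hδ : 0 ≤ δ) (hδ₀ : δ ≤ 1 / 3)
    (hz : 1 / 4 - (1 / 3 : ℝ) ^ 2 * δ < ‖z‖ ^ 2) :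
    0 ≤ ‖z - 1 / 2‖ ^ 2 + 3 * δ * (z - 1 / 2).re + δ ^ 2 := by
  set w := z - 1 / 2
  have hzw : ‖z‖ ^ 2 = ‖w‖ ^ 2 + w.re + 1 / 4 := by
    have := sq_norm_add_ofReal w (1 / 2)
    push_cast at this
    rw [sub_add_cancel] at this
    linarith
  have hre : 3 * δ * (-δ / 9 - ‖w‖ ^ 2) ≤ 3 * δ * w.re :=
    mul_le_mul_of_nonneg_left (by linarith) (by positivity)
  nlinarith [sq_nonneg ‖w‖]

end Complex

theorem weight_uniform_bound_general (m : ℕ) :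
    ∃ δ₀ : ℝ, 0 < δ₀ ∧ ∀ δ : ℝ, 0 < δ → δ < δ₀ →
      ∀ z : ℂ, 1 / 4 - (1 / 3 : ℝ) ^ 2 * δ < ‖z‖ ^ 2 → ‖z‖ ^ 2 < 1 →
        δ ^ ((2 : ℝ) / m) *
            ‖(z - 1 / 2 - (δ : ℂ)) / (z - 1 / 2 + (δ : ℂ))‖ ^ 2 ≤
          5 * δ ^ ((2 : ℝ) / m) := by
  refine ⟨1 / 3, by norm_num, fun δ hδ hδ₀ z hz _ => ?_⟩
  have hquot := Complex.sq_norm_div_sub_add_ofReal_le_five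
    (Complex.quadratic_nonneg_of_lt_sq_norm hδ.le hδ₀.le hz)
  rw [mul_comm 5]
  exact mul_le_mul_of_nonneg_left hquot (Real.rpow_nonneg hδ.le _)

theorem weight_uniform_bound (m : ℕ) (hm : 2 ≤ m) :
    ∃ δ₀ : ℝ, 0 < δ₀ ∧ ∀ δ : ℝ, 0 < δ → δ < δ₀ →
      ∀ z : ℂ, 1 / 4 - (1 / 3 : ℝ) ^ 2 * δ < ‖z‖ ^ 2 → ‖z‖ ^ 2 < 1 →
        δ ^ ((2 : ℝ) / m) *
            ‖(z - 1 / 2 - (δ : ℂ)) / (z - 1 / 2 + (δ : ℂ))‖ ^ 2 ≤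
          5 * δ ^ ((2 : ℝ) / m) :=
  weight_uniform_bound_general m
end
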